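/- arXiv:1308.6394 — 2 statements merged into one kernel-verified Lean document; each statement's English description precedes it below -/
import Mathlib

section
/- Let g: ℝ → ℂ satisfy sup_{u∈ℝ} |1 − g(u)|²(1+|u|²)^{−r} < ∞ where g is 𝓕K for a kernel K of order r whose Fourier transform 𝓕K is ⌊r⌋-times continuously differentiable with (𝓕K)^{(m)}(0) = 0 for 1 ≤ m ≤ ⌊r⌋, 𝓕K(0) = 1, and (𝓕K)^{(⌊r⌋)} is (r − ⌊r⌋)-Hölder continuous with constant L_K. Then for all h > 0 and u ∈ ℝ with |hu| ≤ π: |1 − 𝓕K(hu)| ≤ (L_K / ⌊r⌋!) |hu|^r, and hence sup_{u∈ℝ} |1 − 𝓕K(hu)|²(1+|u|²)^{−r} ≤ (L_K/⌊r⌋! + 2π^{−r})² h^{2r} when 𝓕K is supported on [−π,π]. -/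
/-!
Writing `t ↦ F t - F 0` as the integral of its derivative turns a bound `C |t|^β` on the
derivative into the bound `C / (β + 1) |t|^(β + 1)`; starting from the Hölder bound
`L |t|^(r - m)` on `F^{(m)} - F^{(m)}(0)` and integrating `m` times (the derivatives
`F^{(j)}(0)`, `1 ≤ j ≤ m`, vanish) gives `‖F t - F 0‖ ≤ L / m! |t|^r`. Outside `[-π, π]`
one has `‖1 - F t‖ = 1 ≤ π^{-r} |t|^r`, so `‖1 - F t‖ ≤ (L / m! + π^{-r}) |t|^r` for
all `t`, and the weight `(1 + u²)^{-r}` absorbs `|u|^{2r}`.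
-/

open Real intervalIntegral Nat

theorem norm_sub_le_of_hasDerivAt_of_norm_le_mul_rpow
    {E : Type*} [NormedAddCommGroup E] [NormedSpace ℝ E] [CompleteSpace E]
    {f g : ℝ → E} (hf : ∀ t, HasDerivAt f (g t) t) (hg : Continuous g)
    {C β : ℝ} (hβ : -1 < β) (hbound : ∀ t, ‖g t‖ ≤ C * |t| ^ β) (x : ℝ) :
    ‖f x - f 0‖ ≤ C / (β + 1) * |x| ^ (β + 1) := by
  have hβ1 : β + 1 ≠ 0 := by linarith
  -- substituting `t = s * x` keeps the interval of integration `[0, 1]` whatever the sign of `x`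
  have hftc : ∫ s in (0 : ℝ)..1, x • g (s * x) = f x - f 0 := by
    simpa using integral_eq_sub_of_hasDerivAt
      (fun s _ => (hf (s * x)).scomp s ((hasDerivAt_id s).mul_const x))
      (Continuous.intervalIntegrable (by fun_prop) 0 1)
  have hpointwise : ∀ s ∈ Set.Ioc (0 : ℝ) 1,
      ‖x • g (s * x)‖ ≤ C * |x| ^ (β + 1) * s ^ β := fun s hs => by
    calc ‖x • g (s * x)‖ = |x| * ‖g (s * x)‖ := by rw [norm_smul, Real.norm_eq_abs]
      _ ≤ |x| * (C * |s * x| ^ β) := by gcongr; exact hbound _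
      _ = C * |x| ^ (β + 1) * s ^ β := by
        rw [abs_mul, mul_rpow (abs_nonneg s) (abs_nonneg x), abs_of_pos hs.1,
          rpow_add_one' (abs_nonneg x) hβ1]
        ring
  calc ‖f x - f 0‖ ≤ ∫ s in (0 : ℝ)..1, C * |x| ^ (β + 1) * s ^ β := by
        rw [← hftc]
        exact norm_integral_le_of_norm_le zero_le_one (.of_forall hpointwise)
          ((intervalIntegrable_rpow' hβ).const_mul _)
    _ = C / (β + 1) * |x| ^ (β + 1) := by
        rw [integral_const_mul, integral_rpow (Or.inl hβ), one_rpow, zero_rpow hβ1]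
        field_simp; ring

theorem norm_sub_le_div_factorial_mul_rpow_of_iteratedDeriv
    {E : Type*} [NormedAddCommGroup E] [NormedSpace ℝ E] [CompleteSpace E]
    {L α : ℝ} (hL : 0 ≤ L) (hα : 0 < α) {m : ℕ} {F : ℝ → E} (hF : ContDiff ℝ m F)
    (hvanish : ∀ j : ℕ, 1 ≤ j → j ≤ m → iteratedDeriv j F 0 = 0)
    (htop : ∀ x, ‖iteratedDeriv m F x - iteratedDeriv m F 0‖ ≤ L * |x| ^ α) (x : ℝ) :
    ‖F x - F 0‖ ≤ L / m ! * |x| ^ (α + m) := by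
  induction m generalizing F x with
  | zero => simpa using htop x
  | succ m ih =>
    have hF' : ContDiff ℝ m (deriv F) := ContDiff.deriv' (by exact_mod_cast hF)
    have hderiv_zero : deriv F 0 = 0 := by simpa using hvanish 1 le_rfl (by omega)
    have hderiv_bound : ∀ t, ‖deriv F t‖ ≤ L / m ! * |t| ^ (α + m) := fun t => by
      simpa [hderiv_zero] using
        ih hF' (fun j hj hjm => by
          rw [← iteratedDeriv_succ']; exact hvanish (j + 1) (by omega) (by omega))
          (by simpa [iteratedDeriv_succ'] using htop) t
    have hstep := norm_sub_le_of_hasDerivAt_of_norm_le_mul_rpow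
      (fun t => (hF.differentiable (by simp)).differentiableAt.hasDerivAt (x := t))
      (hF.continuous_deriv (by simp)) (by linarith [(m.cast_nonneg : (0 : ℝ) ≤ m)])
      hderiv_bound x
    have hdenom : (m + 1 : ℝ) ≤ α + m + 1 := by linarith
    calc ‖F x - F 0‖ ≤ L / m ! / (α + m + 1) * |x| ^ (α + m + 1) := hstep
      _ ≤ L / m ! / (m + 1) * |x| ^ (α + m + 1) := by gcongr
      _ = L / (m + 1)! * |x| ^ (α + (m + 1 : ℕ)) := by
        rw [factorial_succ]; push_cast; field_simp; ring_nf

theorem norm_one_sub_le_mul_rpow_of_eq_zero_of_lt_abs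
    {R : Type*} [NormedRing R] [NormOneClass R] {G : ℝ → R} {A c r : ℝ}
    (hA : 0 ≤ A) (hc : 0 < c) (hr : 0 ≤ r)
    (hnear : ∀ t, |t| ≤ c → ‖1 - G t‖ ≤ A * |t| ^ r) (hfar : ∀ t, c < |t| → G t = 0)
    (t : ℝ) : ‖1 - G t‖ ≤ (A + c ^ (-r)) * |t| ^ r := by
  rcases le_or_gt |t| c with ht | ht
  · calc ‖1 - G t‖ ≤ A * |t| ^ r := hnear t ht
      _ ≤ (A + c ^ (-r)) * |t| ^ r := by gcongr; linarith [rpow_nonneg hc.le (-r)]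
  · have hone : 1 ≤ c ^ (-r) * |t| ^ r := by
      rw [rpow_neg hc.le, ← div_eq_inv_mul, ← div_rpow (abs_nonneg t) hc.le]
      exact one_le_rpow ((one_le_div hc).2 ht.le) hr
    rw [hfar t ht, sub_zero, norm_one]
    nlinarith [rpow_nonneg (abs_nonneg t) r]

theorem sq_mul_one_add_sq_rpow_neg_le {a B h u r : ℝ} (ha : 0 ≤ a) (hh : 0 ≤ h) (hr : 0 ≤ r)
    (hab : a ≤ B * |h * u| ^ r) : a ^ 2 * (1 + |u| ^ 2) ^ (-r) ≤ B ^ 2 * h ^ (2 * r) := by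
  have hweight : (|u| ^ 2) ^ r * (1 + |u| ^ 2) ^ (-r) ≤ 1 := by
    rw [rpow_neg (by positivity), ← div_eq_mul_inv]
    exact div_le_one_of_le₀ (rpow_le_rpow (by positivity) (by linarith) hr) (by positivity)
  calc a ^ 2 * (1 + |u| ^ 2) ^ (-r) ≤ (B * |h * u| ^ r) ^ 2 * (1 + |u| ^ 2) ^ (-r) := by
        gcongr
    _ = B ^ 2 * h ^ (2 * r) * ((|u| ^ 2) ^ r * (1 + |u| ^ 2) ^ (-r)) := by
        rw [mul_pow, rpow_pow_comm (abs_nonneg _), abs_mul, mul_pow, abs_of_nonneg hh,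
          mul_rpow (by positivity) (by positivity), ← rpow_natCast_mul hh]
        push_cast
        ring
    _ ≤ B ^ 2 * h ^ (2 * r) := mul_le_of_le_one_right (by positivity) hweight

theorem kernel_order_bias_bound_general
    (r : ℝ) (hr : 0 < r) (m : ℕ) (hm1 : (m : ℝ) < r)
    (L : ℝ) (hL : 0 < L) (FK : ℝ → ℂ)
    (hsmooth : ContDiff ℝ m FK) (h0 : FK 0 = 1)
    (hvanish : ∀ j : ℕ, 1 ≤ j → j ≤ m → iteratedDeriv j FK 0 = 0)
    (hHolder : ∀ x y : ℝ,
      ‖iteratedDeriv m FK x - iteratedDeriv m FK y‖ ≤ L * |x - y| ^ (r - (m : ℝ)))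
    (hsupp : ∀ t : ℝ, π < |t| → FK t = 0) :
    (∀ h : ℝ, 0 < h → ∀ u : ℝ, |h * u| ≤ π →
      ‖1 - FK (h * u)‖ ≤ (L / (Nat.factorial m : ℝ)) * |h * u| ^ r) ∧
    (∀ h : ℝ, 0 < h → ∀ u : ℝ,
      ‖1 - FK (h * u)‖ ^ 2 * (1 + |u| ^ 2) ^ (-r)
        ≤ (L / (Nat.factorial m : ℝ) + 2 * π ^ (-r)) ^ 2 * h ^ (2 * r)) := by
  have htaylor : ∀ t, ‖1 - FK t‖ ≤ L / m ! * |t| ^ r := fun t => by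
    simpa [norm_sub_rev, h0] using norm_sub_le_div_factorial_mul_rpow_of_iteratedDeriv hL.le
      (sub_pos.2 hm1) hsmooth hvanish (fun x => by simpa using hHolder x 0) t
  have hglobal := norm_one_sub_le_mul_rpow_of_eq_zero_of_lt_abs (by positivity) pi_pos hr.le
    (fun t _ => htaylor t) hsupp
  refine ⟨fun h _ u _ => htaylor (h * u), fun h hh u => ?_⟩
  calc ‖1 - FK (h * u)‖ ^ 2 * (1 + |u| ^ 2) ^ (-r)
      ≤ (L / m ! + π ^ (-r)) ^ 2 * h ^ (2 * r) :=
        sq_mul_one_add_sq_rpow_neg_le (norm_nonneg _) hh.le hr.le (hglobal (h * u))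
    _ ≤ (L / m ! + 2 * π ^ (-r)) ^ 2 * h ^ (2 * r) := by
        gcongr
        linarith [rpow_pos_of_pos pi_pos (-r)]

/-- Kernel of order `r`: Taylor expansion plus Hölder continuity of the top
derivative of `𝓕K` give `|1 − 𝓕K(hu)| ≤ (L/⌊r⌋!)|hu|^r` for `|hu| ≤ π`, and hence,
when `𝓕K` is supported on `[−π,π]`,
`|1 − 𝓕K(hu)|²(1+|u|²)^{−r} ≤ (L/⌊r⌋! + 2π^{−r})² h^{2r}` for all `u`. -/
theorem kernel_order_bias_bound
    (r : ℝ) (hr : 0 < r) (m : ℕ) (hm1 : (m : ℝ) < r) (hm2 : r ≤ (m : ℝ) + 1)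
    (L : ℝ) (hL : 0 < L) (FK : ℝ → ℂ)
    (hsmooth : ContDiff ℝ m FK) (h0 : FK 0 = 1)
    (hvanish : ∀ j : ℕ, 1 ≤ j → j ≤ m → iteratedDeriv j FK 0 = 0)
    (hHolder : ∀ x y : ℝ,
      ‖iteratedDeriv m FK x - iteratedDeriv m FK y‖ ≤ L * |x - y| ^ (r - (m : ℝ)))
    (hsupp : ∀ t : ℝ, π < |t| → FK t = 0) :
    (∀ h : ℝ, 0 < h → ∀ u : ℝ, |h * u| ≤ π →
      ‖1 - FK (h * u)‖ ≤ (L / (Nat.factorial m : ℝ)) * |h * u| ^ r) ∧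
    (∀ h : ℝ, 0 < h → ∀ u : ℝ,
      ‖1 - FK (h * u)‖ ^ 2 * (1 + |u| ^ 2) ^ (-r)
        ≤ (L / (Nat.factorial m : ℝ) + 2 * π ^ (-r)) ^ 2 * h ^ (2 * r)) :=
  kernel_order_bias_bound_general r hr m hm1 L hL FK hsmooth h0 hvanish hHolder hsupp
end

section
/- Let Z₁, …, Z_n be i.i.d. complex-valued random variables of modulus ≤ 1 (namely e^{iuX_j} for fixed u), with characteristic function φ(u) = E[e^{iuX₁}], and let φ̂_n(u) = (1/n)Σ e^{iuX_j}. Define the truncated reciprocal 1/φ̃_n(u) := 1(|φ̂_n(u)| ≥ n^{−1/2})/φ̂_n(u). Then for every k ≥ 1 there is a constant C_k depending only on k such that E[ |1/φ̃_n(u) − 1/φ(u)|^k ] ≤ C_k ( n^{−k/2}/|φ(u)|^{2k} ∧ 1/|φ(u)|^k ) for all u with φ(u) ≠ 0. -/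
/-!
Write `r = |φ(u)|`, `t = n^{-1/2}` and `D = |φ̂_n(u) - φ(u)|`. Deterministically,
`|1/φ̃_n(u) - 1/φ(u)| ≤ 8 r⁻² max(t, D²/t)`: when `r ≤ 2t` the crude bound `1/t + 1/r` is already
of order `t/r²`; when `|φ̂_n(u)| ≥ r/2` the difference is `D / (|φ̂_n(u)| r) ≤ 2D/r²`; otherwise
`D ≥ r/2`, so the crude bound `2/t` is at most `(2/t)(2D/r)²`. Taking `k`-th powers and expectations
leaves `E D^{2k} ≲ n^{-k}`. This follows from Hoeffding's lemma: the real and imaginary parts of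
`n(φ̂_n(u) - φ(u))` are sums of `n` independent centred variables with values in intervals of
length 2, hence sub-Gaussian with variance proxy `n`, and a sub-Gaussian variable with variance
proxy `c` has `E Y^{2m} ≤ 2 e^{1/2} (2m)! c^m` because `y^{2m} ≤ (2m)! (e^y + e^{-y})`.
The bound `1/r^k` of the minimum is the crude bound when `r ≤ t` and follows from the first one
when `t ≤ r`.
-/

open MeasureTheory ProbabilityTheory Real Finset
open scoped NNReal

-- The paper's `1/φ̃_n(u)` is `truncInv (n ^ (-1/2)) (φ̂_n(u))`.
noncomputable def truncInv {𝕜 : Type*} [NormedDivisionRing 𝕜] (t : ℝ) (z : 𝕜) : 𝕜 :=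
  if t ≤ ‖z‖ then z⁻¹ else 0

section Truncation

variable {𝕜 : Type*} [NormedDivisionRing 𝕜] {t : ℝ} {φ : 𝕜}

lemma norm_truncInv_le (ht : 0 < t) (z : 𝕜) : ‖truncInv t z‖ ≤ t⁻¹ := by
  unfold truncInv
  split_ifs with h
  · rw [norm_inv]; exact inv_anti₀ ht h
  · simpa using ht.le

lemma norm_truncInv_sub_inv_le_inv_add_inv (ht : 0 < t) (z : 𝕜) :
    ‖truncInv t z - φ⁻¹‖ ≤ t⁻¹ + ‖φ‖⁻¹ :=
  (norm_sub_le _ _).trans (add_le_add (norm_truncInv_le ht z) (norm_inv φ).le)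

lemma norm_truncInv_sub_inv_le (ht : 0 < t) (hφ : φ ≠ 0) (z : 𝕜) :
    ‖truncInv t z - φ⁻¹‖ ≤ 8 / ‖φ‖ ^ 2 * max t (‖z - φ‖ ^ 2 / t) := by
  set r := ‖φ‖
  set D := ‖z - φ‖
  have hr : 0 < r := norm_pos_iff.2 hφ
  have hcrude := norm_truncInv_sub_inv_le_inv_add_inv (φ := φ) ht z
  rcases le_or_gt r (2 * t) with hrt | htr
  · calc _ ≤ t⁻¹ + r⁻¹ := hcrude
      _ ≤ 8 / r ^ 2 * t := by
        rw [div_mul_eq_mul_div, le_div_iff₀ (by positivity)]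
        field_simp
        nlinarith
      _ ≤ _ := by gcongr; exact le_max_left _ _
  rcases le_or_gt (r / 2) ‖z‖ with hz | hz
  · have hz0 : z ≠ 0 := norm_pos_iff.1 (by linarith)
    have hD : D ≤ max t (D ^ 2 / t) := by
      rcases le_total D t with hDt | htD
      · exact le_max_of_le_left hDt
      · refine le_max_of_le_right ?_
        rw [le_div_iff₀ ht]
        nlinarith
    calc ‖truncInv t z - φ⁻¹‖ = ‖z‖⁻¹ * D * r⁻¹ := by
          rw [truncInv, if_pos (by linarith), inv_sub_inv' hz0 hφ, norm_mul, norm_mul, norm_inv,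
            norm_inv, norm_sub_rev]
      _ ≤ (r / 2)⁻¹ * D * r⁻¹ := by gcongr
      _ = 2 / r ^ 2 * D := by field_simp
      _ ≤ 8 / r ^ 2 * max t (D ^ 2 / t) := by gcongr; norm_num
  · have hD : r / 2 ≤ D := by
      have := norm_sub_norm_le φ z
      rw [norm_sub_rev] at this
      linarith
    calc _ ≤ t⁻¹ + r⁻¹ := hcrude
      _ ≤ 8 / r ^ 2 * (D ^ 2 / t) := by
        rw [mul_div_assoc', div_mul_eq_mul_div, le_div_iff₀ (by positivity)]
        field_simp
        nlinarith
      _ ≤ _ := by gcongr; exact le_max_right _ _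

variable {Ω : Type*} [MeasurableSpace Ω] {P : Measure Ω} [IsProbabilityMeasure P] {F : Ω → 𝕜}

lemma integral_norm_truncInv_sub_inv_pow_le (ht : 0 < t) (hφ : φ ≠ 0) {M : ℝ} (k : ℕ)
    (hint : Integrable (fun ω ↦ ‖F ω - φ‖ ^ (2 * k)) P)
    (hmom : ∫ ω, ‖F ω - φ‖ ^ (2 * k) ∂P ≤ M * t ^ (2 * k)) :
    ∫ ω, ‖truncInv t (F ω) - φ⁻¹‖ ^ k ∂P ≤ 8 ^ k * (1 + M) * (t ^ k / ‖φ‖ ^ (2 * k)) := by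
  have hr : ‖φ‖ ≠ 0 := norm_ne_zero_iff.2 hφ
  have hpt : ∀ ω, ‖truncInv t (F ω) - φ⁻¹‖ ^ k
      ≤ (8 / ‖φ‖ ^ 2) ^ k * (t ^ k + ‖F ω - φ‖ ^ (2 * k) / t ^ k) := fun ω ↦ by
    calc _ ≤ (8 / ‖φ‖ ^ 2 * max t (‖F ω - φ‖ ^ 2 / t)) ^ k := by
          gcongr; exact norm_truncInv_sub_inv_le ht hφ (F ω)
      _ ≤ _ := by
        rw [mul_pow, pow_mul, ← div_pow]
        gcongr
        rcases le_total t (‖F ω - φ‖ ^ 2 / t) with h | h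
        · rw [max_eq_right h]; exact le_add_of_nonneg_left (by positivity)
        · rw [max_eq_left h]; exact le_add_of_nonneg_right (by positivity)
  calc _ ≤ ∫ ω, (8 / ‖φ‖ ^ 2) ^ k * (t ^ k + ‖F ω - φ‖ ^ (2 * k) / t ^ k) ∂P :=
        integral_mono_of_nonneg (ae_of_all _ fun ω ↦ by positivity)
          (((integrable_const _).add (hint.div_const _)).const_mul _) (ae_of_all _ hpt)
    _ = (8 / ‖φ‖ ^ 2) ^ k * (t ^ k + (∫ ω, ‖F ω - φ‖ ^ (2 * k) ∂P) / t ^ k) := by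
        rw [integral_const_mul, integral_add (integrable_const _) (hint.div_const _),
          integral_div, integral_const, probReal_univ, one_smul]
    _ ≤ (8 / ‖φ‖ ^ 2) ^ k * (t ^ k + M * t ^ (2 * k) / t ^ k) := by gcongr
    _ = 8 ^ k * (1 + M) * (t ^ k / ‖φ‖ ^ (2 * k)) := by
        have htk : M * t ^ (2 * k) / t ^ k = M * t ^ k := by
          rw [two_mul, pow_add]; field_simp
        rw [htk, div_pow, ← pow_mul]
        ring

lemma integral_norm_truncInv_sub_inv_pow_le_min (ht : 0 < t) (hφ : φ ≠ 0) {M : ℝ} (k : ℕ)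
    (hint : Integrable (fun ω ↦ ‖F ω - φ‖ ^ (2 * k)) P)
    (hmom : ∫ ω, ‖F ω - φ‖ ^ (2 * k) ∂P ≤ M * t ^ (2 * k)) :
    ∫ ω, ‖truncInv t (F ω) - φ⁻¹‖ ^ k ∂P
      ≤ 8 ^ k * (1 + M) * min (t ^ k / ‖φ‖ ^ (2 * k)) (1 / ‖φ‖ ^ k) := by
  have hr : 0 < ‖φ‖ := norm_pos_iff.2 hφ
  have hM : 0 ≤ M := nonneg_of_mul_nonneg_left
    ((integral_nonneg fun ω ↦ by positivity).trans hmom) (by positivity)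
  have hsharp := integral_norm_truncInv_sub_inv_pow_le ht hφ k hint hmom
  rw [mul_min_of_nonneg _ _ (by positivity)]
  refine le_min hsharp ?_
  rcases le_total t ‖φ‖ with htr | hrt
  · refine hsharp.trans (mul_le_mul_of_nonneg_left ?_ (by positivity))
    calc t ^ k / ‖φ‖ ^ (2 * k) ≤ ‖φ‖ ^ k / ‖φ‖ ^ (2 * k) := by gcongr
      _ = 1 / ‖φ‖ ^ k := by rw [two_mul, pow_add]; field_simp
  · calc _ ≤ ∫ _ω, (2 / ‖φ‖) ^ k ∂P := integral_mono_of_nonneg (ae_of_all _ fun ω ↦ by positivity)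
          (integrable_const _) (ae_of_all _ fun ω ↦ by
            refine pow_le_pow_left₀ (norm_nonneg _) ?_ k
            refine (norm_truncInv_sub_inv_le_inv_add_inv ht _).trans ?_
            have := inv_anti₀ hr hrt
            rw [div_eq_mul_inv]
            linarith)
      _ = 2 ^ k * (1 / ‖φ‖ ^ k) := by
        rw [integral_const, probReal_univ, one_smul, div_pow, mul_one_div]
      _ ≤ 8 ^ k * (1 + M) * (1 / ‖φ‖ ^ k) := by
        gcongr
        calc (2 : ℝ) ^ k ≤ 8 ^ k := by gcongr; norm_num
          _ ≤ 8 ^ k * (1 + M) := le_mul_of_one_le_right (by positivity) (by linarith)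

end Truncation

lemma Real.pow_two_mul_le_factorial_mul_exp_add_exp_neg (y : ℝ) (m : ℕ) :
    y ^ (2 * m) ≤ (2 * m).factorial * (exp y + exp (-y)) := by
  have hexp : exp |y| ≤ exp y + exp (-y) := by
    rcases abs_cases y with ⟨h, -⟩ | ⟨h, -⟩ <;> rw [h] <;> linarith [exp_pos y, exp_pos (-y)]
  calc y ^ (2 * m) = |y| ^ (2 * m) := by rw [pow_mul, pow_mul, sq_abs]
    _ ≤ (2 * m).factorial * exp |y| := by
        rw [← div_le_iff₀' (by positivity)]
        exact pow_div_factorial_le_exp _ (abs_nonneg y) _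
    _ ≤ (2 * m).factorial * (exp y + exp (-y)) := by gcongr

namespace ProbabilityTheory.HasSubgaussianMGF

variable {Ω : Type*} [MeasurableSpace Ω] {μ : Measure Ω} {X : Ω → ℝ} {c : ℝ≥0}

lemma integrable_pow (h : HasSubgaussianMGF X c μ) (n : ℕ) :
    Integrable (fun ω ↦ X ω ^ n) μ :=
  integrable_pow_of_mem_interior_integrableExpSet (by simp [h.integrableExpSet_eq_univ]) n

lemma integral_pow_two_mul_le (h : HasSubgaussianMGF X c μ) (hc : 0 < c) (m : ℕ) :
    ∫ ω, X ω ^ (2 * m) ∂μ ≤ 2 * exp (1 / 2) * (2 * m).factorial * c ^ m := by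
  set s : ℝ := (√(c : ℝ))⁻¹
  have hsc : s ^ 2 * c = 1 := by
    rw [inv_pow, Real.sq_sqrt c.coe_nonneg, inv_mul_cancel₀ (by exact_mod_cast hc.ne')]
  have hmgf : mgf X μ s + mgf X μ (-s) ≤ 2 * exp (1 / 2) := by
    have h₁ := h.mgf_le s
    have h₂ := h.mgf_le (-s)
    rw [neg_sq, mul_comm (c : ℝ), hsc] at h₂
    rw [mul_comm (c : ℝ), hsc] at h₁
    linarith
  have hmoment : s ^ (2 * m) * ∫ ω, X ω ^ (2 * m) ∂μ
      ≤ (2 * m).factorial * (mgf X μ s + mgf X μ (-s)) := by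
    rw [mgf, mgf, ← integral_add (h.integrable_exp_mul s) (h.integrable_exp_mul (-s)),
      ← integral_const_mul, ← integral_const_mul]
    refine integral_mono ((h.integrable_pow _).const_mul _)
      (((h.integrable_exp_mul s).add (h.integrable_exp_mul (-s))).const_mul _) fun ω ↦ ?_
    simpa only [← mul_pow, neg_mul] using pow_two_mul_le_factorial_mul_exp_add_exp_neg (s * X ω) m
  calc ∫ ω, X ω ^ (2 * m) ∂μ = (c : ℝ) ^ m * (s ^ (2 * m) * ∫ ω, X ω ^ (2 * m) ∂μ) := by
        rw [← mul_assoc, pow_mul, ← mul_pow, mul_comm (c : ℝ), hsc, one_pow, one_mul]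
    _ ≤ (c : ℝ) ^ m * ((2 * m).factorial * (2 * exp (1 / 2))) :=
        mul_le_mul_of_nonneg_left (hmoment.trans (by gcongr)) (by positivity)
    _ = 2 * exp (1 / 2) * (2 * m).factorial * c ^ m := by ring

end ProbabilityTheory.HasSubgaussianMGF

section Hoeffding

variable {Ω : Type*} [MeasurableSpace Ω] {μ : Measure Ω} [IsProbabilityMeasure μ]
  {ι : Type*} [Fintype ι]

lemma hasSubgaussianMGF_sum_sub_integral_of_mem_Icc {Y : ι → Ω → ℝ} (hY : ∀ j, AEMeasurable (Y j) μ)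
    (hind : iIndepFun Y μ) (hle : ∀ j, ∀ᵐ ω ∂μ, Y j ω ∈ Set.Icc (-1) 1) :
    HasSubgaussianMGF (fun ω ↦ ∑ j, (Y j ω - ∫ ω', Y j ω' ∂μ)) (Fintype.card ι) μ := by
  have hcen := hind.comp (fun j y ↦ y - ∫ ω', Y j ω' ∂μ) fun j ↦ measurable_id.sub_const _
  convert HasSubgaussianMGF.sum_of_iIndepFun hcen (s := univ)
    fun j _ ↦ hasSubgaussianMGF_of_mem_Icc (hY j) (hle j)
  simp only [Function.comp_apply]
  norm_num

variable {Z : ι → Ω → ℂ} (hZ : ∀ j, AEMeasurable (Z j) μ) (hind : iIndepFun Z μ)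
  (hle : ∀ j, ∀ᵐ ω ∂μ, ‖Z j ω‖ ≤ 1)
include hZ hind hle

lemma hasSubgaussianMGF_dual_sum_sub_integral (L : StrongDual ℝ ℂ) (hL : ‖L‖ ≤ 1) :
    HasSubgaussianMGF (fun ω ↦ L (∑ j, (Z j ω - ∫ ω', Z j ω' ∂μ))) (Fintype.card ι) μ := by
  have hint : ∀ j, Integrable (Z j) μ := fun j ↦ .of_bound (hZ j).aestronglyMeasurable 1 (hle j)
  convert hasSubgaussianMGF_sum_sub_integral_of_mem_Icc
    (fun j ↦ L.continuous.measurable.comp_aemeasurable (hZ j))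
    (hind.comp (fun _ ↦ L) fun _ ↦ L.continuous.measurable) fun j ↦ ?_ using 2 with ω
  · simp [map_sum, L.integral_comp_comm (hint _)]
  · filter_upwards [hle j] with ω hω
    exact abs_le.mp ((L.le_opNorm _).trans (mul_le_one₀ hL (norm_nonneg _) hω))

end Hoeffding

lemma Complex.norm_pow_two_mul_le (z : ℂ) (m : ℕ) :
    ‖z‖ ^ (2 * m) ≤ 2 ^ m * (z.re ^ (2 * m) + z.im ^ (2 * m)) :=
  calc ‖z‖ ^ (2 * m) = (z.re ^ 2 + z.im ^ 2) ^ m := by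
        rw [pow_mul, Complex.sq_norm, Complex.normSq_apply, sq, sq]
    _ ≤ 2 ^ (m - 1) * ((z.re ^ 2) ^ m + (z.im ^ 2) ^ m) := add_pow_le (sq_nonneg _) (sq_nonneg _) m
    _ ≤ 2 ^ m * (z.re ^ (2 * m) + z.im ^ (2 * m)) := by
        rw [← pow_mul, ← pow_mul]
        exact mul_le_mul_of_nonneg_right (pow_le_pow_right₀ one_le_two (Nat.sub_le m 1))
          (add_nonneg ((even_two_mul m).pow_nonneg _) ((even_two_mul m).pow_nonneg _))

section ComplexMoments

variable {Ω : Type*} [MeasurableSpace Ω] {μ : Measure Ω} [IsProbabilityMeasure μ]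
  {ι : Type*} [Fintype ι] {Z : ι → Ω → ℂ} (hZ : ∀ j, AEMeasurable (Z j) μ) (hind : iIndepFun Z μ)
  (hle : ∀ j, ∀ᵐ ω ∂μ, ‖Z j ω‖ ≤ 1)
include hZ hind hle

lemma integrable_norm_sum_sub_integral_pow (m : ℕ) :
    Integrable (fun ω ↦ ‖∑ j, (Z j ω - ∫ ω', Z j ω' ∂μ)‖ ^ (2 * m)) μ := by
  have hre := hasSubgaussianMGF_dual_sum_sub_integral hZ hind hle _ Complex.reCLM_norm.le
  have him := hasSubgaussianMGF_dual_sum_sub_integral hZ hind hle _ Complex.imCLM_norm.le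
  refine (((hre.integrable_pow (2 * m)).add (him.integrable_pow (2 * m))).const_mul (2 ^ m)).mono'
    (by fun_prop) (ae_of_all _ fun ω ↦ ?_)
  rw [Real.norm_eq_abs, abs_of_nonneg (by positivity)]
  exact Complex.norm_pow_two_mul_le _ m

lemma integral_norm_sum_sub_integral_pow_le [Nonempty ι] (m : ℕ) :
    ∫ ω, ‖∑ j, (Z j ω - ∫ ω', Z j ω' ∂μ)‖ ^ (2 * m) ∂μ
      ≤ 2 ^ (m + 2) * exp (1 / 2) * (2 * m).factorial * Fintype.card ι ^ m := by
  have hre := hasSubgaussianMGF_dual_sum_sub_integral hZ hind hle _ Complex.reCLM_norm.le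
  have him := hasSubgaussianMGF_dual_sum_sub_integral hZ hind hle _ Complex.imCLM_norm.le
  simp only [Complex.reCLM_apply, Complex.imCLM_apply] at hre him
  have hcard : (0 : ℝ≥0) < Fintype.card ι := by exact_mod_cast Fintype.card_pos
  have hre_le := hre.integral_pow_two_mul_le hcard m
  have him_le := him.integral_pow_two_mul_le hcard m
  simp only [NNReal.coe_natCast] at hre_le him_le
  calc _ ≤ ∫ ω, 2 ^ m * ((∑ j, (Z j ω - ∫ ω', Z j ω' ∂μ)).re ^ (2 * m)
        + (∑ j, (Z j ω - ∫ ω', Z j ω' ∂μ)).im ^ (2 * m)) ∂μ :=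
        integral_mono_of_nonneg (ae_of_all _ fun ω ↦ by positivity)
          (((hre.integrable_pow _).add (him.integrable_pow _)).const_mul _)
          (ae_of_all _ fun ω ↦ Complex.norm_pow_two_mul_le _ m)
    _ = 2 ^ m * (∫ ω, (∑ j, (Z j ω - ∫ ω', Z j ω' ∂μ)).re ^ (2 * m) ∂μ
        + ∫ ω, (∑ j, (Z j ω - ∫ ω', Z j ω' ∂μ)).im ^ (2 * m) ∂μ) := by
        rw [integral_const_mul, integral_add (hre.integrable_pow _) (him.integrable_pow _)]
    _ ≤ 2 ^ m * (2 * (2 * exp (1 / 2) * (2 * m).factorial * Fintype.card ι ^ m)) := by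
        gcongr
        linarith
    _ = _ := by ring

end ComplexMoments

lemma Real.rpow_neg_one_half_pow {x : ℝ} (hx : 0 ≤ x) (k : ℕ) :
    (x ^ (-(1 : ℝ) / 2)) ^ k = x ^ (-(k : ℝ) / 2) := by
  rw [← Real.rpow_natCast, ← Real.rpow_mul hx]
  ring_nf

lemma norm_inv_mul_sum_sub_pow {n : ℕ} (hn : 0 < n) (z : Fin n → ℂ) (φ : ℂ) (p : ℕ) :
    ‖(n : ℂ)⁻¹ * ∑ j, z j - φ‖ ^ p = ((n : ℝ) ^ p)⁻¹ * ‖∑ j, (z j - φ)‖ ^ p := by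
  have hn' : (n : ℂ) ≠ 0 := by exact_mod_cast hn.ne'
  rw [sum_sub_distrib, sum_const, card_univ, Fintype.card_fin, nsmul_eq_mul,
    show (n : ℂ)⁻¹ * ∑ j, z j - φ = (n : ℂ)⁻¹ * (∑ j, z j - n * φ) by field_simp,
    norm_mul, mul_pow, norm_inv, Complex.norm_natCast, inv_pow]

section EmpiricalMean

variable {Ω : Type*} [MeasurableSpace Ω] {μ : Measure Ω} [IsProbabilityMeasure μ]
  {n : ℕ} {Z : Fin n → Ω → ℂ} {φ : ℂ} (hZ : ∀ j, AEMeasurable (Z j) μ) (hind : iIndepFun Z μ)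
  (hle : ∀ j, ∀ᵐ ω ∂μ, ‖Z j ω‖ ≤ 1) (hφ : ∀ j, ∫ ω, Z j ω ∂μ = φ) (hn : 0 < n)
include hZ hind hle hφ hn

lemma integrable_norm_inv_mul_sum_sub_pow (m : ℕ) :
    Integrable (fun ω ↦ ‖(n : ℂ)⁻¹ * ∑ j, Z j ω - φ‖ ^ (2 * m)) μ := by
  have hsum := integrable_norm_sum_sub_integral_pow hZ hind hle m
  simp_rw [hφ] at hsum
  simp_rw [norm_inv_mul_sum_sub_pow hn]
  exact hsum.const_mul _

lemma integral_norm_inv_mul_sum_sub_pow_le (m : ℕ) :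
    ∫ ω, ‖(n : ℂ)⁻¹ * ∑ j, Z j ω - φ‖ ^ (2 * m) ∂μ
      ≤ 2 ^ (m + 2) * exp (1 / 2) * (2 * m).factorial * ((n : ℝ) ^ (-(1 : ℝ) / 2)) ^ (2 * m) := by
  have : Nonempty (Fin n) := ⟨⟨0, hn⟩⟩
  have hsum := integral_norm_sum_sub_integral_pow_le hZ hind hle m
  simp_rw [hφ, Fintype.card_fin] at hsum
  simp_rw [norm_inv_mul_sum_sub_pow hn, integral_const_mul]
  calc _ ≤ ((n : ℝ) ^ (2 * m))⁻¹ * (2 ^ (m + 2) * exp (1 / 2) * (2 * m).factorial * n ^ m) := by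
        gcongr
    _ = _ := by
        rw [Real.rpow_neg_one_half_pow n.cast_nonneg, Nat.cast_mul, Nat.cast_two,
          neg_div, mul_div_cancel_left₀ _ two_ne_zero, Real.rpow_neg n.cast_nonneg,
          Real.rpow_natCast, two_mul, pow_add]
        field_simp

end EmpiricalMean

/-- Neumann's lemma: for the truncated reciprocal
`1/φ̃_n(u) = 1(|φ̂_n(u)| ≥ n^{−1/2})/φ̂_n(u)` of the empirical characteristic
function of an i.i.d. sample, for every `k ≥ 1` there is a constant `C_k`
depending only on `k` with
`E[|1/φ̃_n(u) − 1/φ(u)|^k] ≤ C_k (n^{−k/2}/|φ(u)|^{2k} ∧ 1/|φ(u)|^k)`. -/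
theorem neumann_lemma_pointwise :
    ∀ k : ℕ, 1 ≤ k → ∃ C : ℝ, 0 < C ∧
      ∀ (Ω : Type) (_ : MeasurableSpace Ω) (P : Measure Ω), IsProbabilityMeasure P →
      ∀ (n : ℕ) (hn : 0 < n) (X : Fin n → Ω → ℝ),
        (∀ j, Measurable (X j)) →
        iIndepFun X P →
        (∀ j, Measure.map (X j) P = Measure.map (X ⟨0, hn⟩) P) →
        ∀ u : ℝ, (∫ ω, Complex.exp (Complex.I * u * (X ⟨0, hn⟩ ω)) ∂P) ≠ 0 →
          (∫ ω, ‖(if ((n : ℝ)) ^ (-(1 : ℝ) / 2)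
                    ≤ ‖(n : ℂ)⁻¹ * ∑ j, Complex.exp (Complex.I * u * (X j ω))‖
                  then ((n : ℂ)⁻¹ * ∑ j, Complex.exp (Complex.I * u * (X j ω)))⁻¹
                  else 0)
                - (∫ ω', Complex.exp (Complex.I * u * (X ⟨0, hn⟩ ω')) ∂P)⁻¹‖ ^ k ∂P)
            ≤ C * min
                ((n : ℝ) ^ (-(k : ℝ) / 2)
                  / ‖∫ ω', Complex.exp (Complex.I * u * (X ⟨0, hn⟩ ω')) ∂P‖ ^ (2 * k))
                (1 / ‖∫ ω', Complex.exp (Complex.I * u * (X ⟨0, hn⟩ ω')) ∂P‖ ^ k) := by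
  intro k _
  refine ⟨8 ^ k * (1 + 2 ^ (k + 2) * exp (1 / 2) * (2 * k).factorial), by positivity, ?_⟩
  intro Ω _ P _ n hn X hX hind hident u hφ
  set Z : Fin n → Ω → ℂ := fun j ω ↦ Complex.exp (Complex.I * u * X j ω)
  have hZ : ∀ j, AEMeasurable (Z j) P := fun j ↦ by fun_prop
  have hZind : iIndepFun Z P :=
    hind.comp (fun _ x ↦ Complex.exp (Complex.I * u * x)) fun _ ↦ by fun_prop
  have hZle : ∀ j, ∀ᵐ ω ∂P, ‖Z j ω‖ ≤ 1 :=
    fun j ↦ ae_of_all _ fun ω ↦ by simp [Z, Complex.norm_exp]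
  have hZint : ∀ j, ∫ ω, Z j ω ∂P = ∫ ω, Z ⟨0, hn⟩ ω ∂P := fun j ↦ by
    have hcont : Continuous fun x : ℝ ↦ Complex.exp (Complex.I * u * x) := by fun_prop
    rw [← integral_map (hX j).aemeasurable hcont.aestronglyMeasurable, hident j,
      integral_map (hX _).aemeasurable hcont.aestronglyMeasurable]
  rw [← Real.rpow_neg_one_half_pow n.cast_nonneg]
  exact integral_norm_truncInv_sub_inv_pow_le_min (by positivity) hφ k
    (integrable_norm_inv_mul_sum_sub_pow hZ hZind hZle hZint hn k)
    (integral_norm_inv_mul_sum_sub_pow_le hZ hZind hZle hZint hn k)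
end
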